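/- Let C > 0 and D ∈ ℝ, and define h(x) = e^{−x}·(C·ψ(x) + D·(x − 1)) for x ≥ 0, where ψ(s) = −1/20 + (2/5)e^{−3s} − (9/10)e^{−2s} + (1/2)e^{−s}. Then equality holds in the Cauchy–Schwarz bound underlying the local Bahadur efficiency of the integral-type test: (∫₀^∞ ψ(x)·h(x) dx)² = (∫₀^∞ ψ(x)²·e^{−x} dx)·(∫₀^∞ h(x)²·e^{x} dx − (∫₀^∞ x·h(x) dx)²). -/

import Mathlib

/-!
Write `h = e^{-x} u` with `u = C ψ + D (x - 1)`. In `L²(e^{-x} dx)` on `(0, ∞)` the function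
`ψ` is orthogonal to every affine function, while `∫ (a + b x) (x - 1) e^{-x} dx = b`.
Hence `∫ ψ h = C ‖ψ‖²`, `∫ h² e^x = ‖u‖² = C² ‖ψ‖² + D²` and `∫ x h = D`, so both sides
equal `C² ‖ψ‖⁴`. Every integral involved is a combination of the Gamma integrals
`∫₀^∞ x^k e^{-n x} dx = k! / n^{k+1}`.
-/

open Real MeasureTheory Set

/-- The projection `ψ` from the paper. -/
noncomputable def psi (s : ℝ) : ℝ :=
  -1/20 + (2/5) * exp (-(3*s)) - (9/10) * exp (-(2*s)) + (1/2) * exp (-s)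

open Nat in
theorem integral_pow_mul_exp_neg_mul_Ioi (k : ℕ) {c : ℝ} (hc : 0 < c) :
    ∫ x in Ioi (0:ℝ), x ^ k * exp (-(c * x)) = k ! / c ^ (k + 1) := by
  have key := integral_rpow_mul_exp_neg_mul_Ioi (a := k + 1) (by positivity) hc
  simp_rw [add_sub_cancel_right, rpow_natCast, Gamma_nat_eq_factorial] at key
  rw [key, ← Nat.cast_succ, rpow_natCast, one_div, inv_pow, inv_mul_eq_div]

theorem integrableOn_pow_mul_exp_neg_mul_Ioi (k : ℕ) {c : ℝ} (hc : 0 < c) :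
    IntegrableOn (fun x : ℝ => x ^ k * exp (-(c * x))) (Ioi 0) :=
  .of_integral_ne_zero (by rw [integral_pow_mul_exp_neg_mul_Ioi k hc]; positivity)

theorem exp_neg_pow (x : ℝ) (n : ℕ) : exp (-x) ^ n = exp (-(n * x)) := by
  rw [← exp_nat_mul, mul_neg]

noncomputable def expPoly : List (ℝ × ℕ × ℕ) → ℝ → ℝ
  | [], _ => 0
  | (c, k, n) :: l, x => c * x ^ k * exp (-x) ^ n + expPoly l x

theorem integrableOn_expPoly : ∀ l : List (ℝ × ℕ × ℕ), (∀ p ∈ l, p.2.2 ≠ 0) →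
    IntegrableOn (expPoly l) (Ioi 0)
  | [], _ => integrableOn_zero
  | (c, k, n) :: l, hl => by
    simp only [List.forall_mem_cons] at hl
    refine Integrable.add ?_ (integrableOn_expPoly l hl.2)
    simp_rw [mul_assoc, exp_neg_pow]
    exact (integrableOn_pow_mul_exp_neg_mul_Ioi k (by positivity [hl.1])).const_mul c

open Nat in
theorem integral_expPoly : ∀ l : List (ℝ × ℕ × ℕ), (∀ p ∈ l, p.2.2 ≠ 0) →
    ∫ x in Ioi (0:ℝ), expPoly l x =
      (l.map fun p => p.1 * p.2.1 ! / (p.2.2 : ℝ) ^ (p.2.1 + 1)).sum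
  | [], _ => by simp [expPoly]
  | (c, k, n) :: l, hl => by
    simp only [List.forall_mem_cons] at hl
    have hn : (0 : ℝ) < n := by positivity [hl.1]
    simp only [expPoly, mul_assoc, exp_neg_pow]
    rw [integral_add ((integrableOn_pow_mul_exp_neg_mul_Ioi k hn).const_mul c)
      (integrableOn_expPoly l hl.2), integral_const_mul, integral_pow_mul_exp_neg_mul_Ioi k hn,
      integral_expPoly l hl.2, List.map_cons, List.sum_cons, mul_div_assoc]

theorem psi_eq_exp_neg_pow (x : ℝ) :
    psi x = -1/20 + 2/5 * exp (-x) ^ 3 - 9/10 * exp (-x) ^ 2 + 1/2 * exp (-x) := by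
  simp only [psi, exp_neg_pow]
  norm_num

theorem psi_sq_mul_exp_neg_eq_expPoly :
    (fun x => psi x ^ 2 * exp (-x)) = expPoly [(1/400, 0, 1), (-1/20, 0, 2), (17/50, 0, 3),
      (-47/50, 0, 4), (121/100, 0, 5), (-18/25, 0, 6), (4/25, 0, 7)] := by
  ext x
  simp only [psi_eq_exp_neg_pow, expPoly]
  ring

theorem integrableOn_psi_sq_mul_exp_neg :
    IntegrableOn (fun x => psi x ^ 2 * exp (-x)) (Ioi 0) := by
  rw [psi_sq_mul_exp_neg_eq_expPoly]
  exact integrableOn_expPoly _ (by simp)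

theorem psi_mul_affine_mul_exp_neg_eq_expPoly (a b : ℝ) :
    (fun x => psi x * (a + b * x) * exp (-x)) =
      expPoly [(-a/20, 0, 1), (-b/20, 1, 1), (2*a/5, 0, 4), (2*b/5, 1, 4),
        (-9*a/10, 0, 3), (-9*b/10, 1, 3), (a/2, 0, 2), (b/2, 1, 2)] := by
  ext x
  simp only [psi_eq_exp_neg_pow, expPoly]
  ring

theorem integrableOn_psi_mul_affine_mul_exp_neg (a b : ℝ) :
    IntegrableOn (fun x => psi x * (a + b * x) * exp (-x)) (Ioi 0) := by
  rw [psi_mul_affine_mul_exp_neg_eq_expPoly]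
  exact integrableOn_expPoly _ (by simp)

theorem integral_psi_mul_affine_mul_exp_neg (a b : ℝ) :
    ∫ x in Ioi (0:ℝ), psi x * (a + b * x) * exp (-x) = 0 := by
  rw [psi_mul_affine_mul_exp_neg_eq_expPoly, integral_expPoly _ (by simp)]
  norm_num
  ring

theorem affine_mul_sub_one_mul_exp_neg_eq_expPoly (a b : ℝ) :
    (fun x => (a + b * x) * (x - 1) * exp (-x)) =
      expPoly [(-a, 0, 1), (a - b, 1, 1), (b, 2, 1)] := by
  ext x
  simp only [expPoly]
  ring

theorem integrableOn_affine_mul_sub_one_mul_exp_neg (a b : ℝ) :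
    IntegrableOn (fun x => (a + b * x) * (x - 1) * exp (-x)) (Ioi 0) := by
  rw [affine_mul_sub_one_mul_exp_neg_eq_expPoly]
  exact integrableOn_expPoly _ (by simp)

theorem integral_affine_mul_sub_one_mul_exp_neg (a b : ℝ) :
    ∫ x in Ioi (0:ℝ), (a + b * x) * (x - 1) * exp (-x) = b := by
  rw [affine_mul_sub_one_mul_exp_neg_eq_expPoly, integral_expPoly _ (by simp)]
  norm_num
  ring

section

variable {C D : ℝ} {h : ℝ → ℝ}

theorem integral_psi_mul_eq
    (hh : EqOn h (fun x => exp (-x) * (C * psi x + D * (x - 1))) (Ioi 0)) :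
    ∫ x in Ioi (0:ℝ), psi x * h x = C * ∫ x in Ioi (0:ℝ), psi x ^ 2 * exp (-x) := by
  rw [setIntegral_congr_fun measurableSet_Ioi (g := fun x =>
      C * (psi x ^ 2 * exp (-x)) + psi x * (-D + D * x) * exp (-x))
      fun x hx => by rw [hh hx]; ring,
    integral_add (integrableOn_psi_sq_mul_exp_neg.const_mul C)
      (integrableOn_psi_mul_affine_mul_exp_neg _ _),
    integral_const_mul, integral_psi_mul_affine_mul_exp_neg, add_zero]

theorem integral_sq_mul_exp_eq
    (hh : EqOn h (fun x => exp (-x) * (C * psi x + D * (x - 1))) (Ioi 0)) :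
    ∫ x in Ioi (0:ℝ), h x ^ 2 * exp x =
      C ^ 2 * (∫ x in Ioi (0:ℝ), psi x ^ 2 * exp (-x)) + D ^ 2 := by
  rw [setIntegral_congr_fun measurableSet_Ioi (g := fun x =>
      C ^ 2 * (psi x ^ 2 * exp (-x)) + (psi x * (-2 * C * D + 2 * C * D * x) * exp (-x)
        + (-D ^ 2 + D ^ 2 * x) * (x - 1) * exp (-x)))
      fun x hx => by
        simp only [hh hx, exp_neg]
        field_simp
        ring,
    integral_add (integrableOn_psi_sq_mul_exp_neg.const_mul _)
      ((integrableOn_psi_mul_affine_mul_exp_neg _ _).fun_add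
        (integrableOn_affine_mul_sub_one_mul_exp_neg _ _)),
    integral_add (integrableOn_psi_mul_affine_mul_exp_neg _ _)
      (integrableOn_affine_mul_sub_one_mul_exp_neg _ _),
    integral_const_mul, integral_psi_mul_affine_mul_exp_neg,
    integral_affine_mul_sub_one_mul_exp_neg, zero_add]

theorem integral_mul_eq
    (hh : EqOn h (fun x => exp (-x) * (C * psi x + D * (x - 1))) (Ioi 0)) :
    ∫ x in Ioi (0:ℝ), x * h x = D := by
  rw [setIntegral_congr_fun measurableSet_Ioi (g := fun x =>
      psi x * (0 + C * x) * exp (-x) + (0 + D * x) * (x - 1) * exp (-x))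
      fun x hx => by rw [hh hx]; ring,
    integral_add (integrableOn_psi_mul_affine_mul_exp_neg _ _)
      (integrableOn_affine_mul_sub_one_mul_exp_neg _ _),
    integral_psi_mul_affine_mul_exp_neg, integral_affine_mul_sub_one_mul_exp_neg, zero_add]

end

theorem stmt_16_general (C D : ℝ)
    (h : ℝ → ℝ) (hdef : ∀ x, 0 ≤ x → h x = exp (-x) * (C * psi x + D * (x - 1))) :
    (∫ x in Ioi (0:ℝ), psi x * h x)^2 =
      (∫ x in Ioi (0:ℝ), (psi x)^2 * exp (-x)) *
        ((∫ x in Ioi (0:ℝ), (h x)^2 * exp x) - (∫ x in Ioi (0:ℝ), x * h x)^2) := by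
  have hh : EqOn h (fun x => exp (-x) * (C * psi x + D * (x - 1))) (Ioi 0) :=
    fun x hx => hdef x hx.le
  rw [integral_psi_mul_eq hh, integral_sq_mul_exp_eq hh, integral_mul_eq hh]
  ring

/-- For `h(x) = e^{−x}(C·ψ(x) + D·(x−1))` with `C > 0`, equality holds in the
Cauchy–Schwarz bound underlying the local Bahadur efficiency of the integral-type test. -/
theorem stmt_16 (C D : ℝ) (hC : 0 < C)
    (h : ℝ → ℝ) (hdef : ∀ x, 0 ≤ x → h x = exp (-x) * (C * psi x + D * (x - 1))) :
    (∫ x in Ioi (0:ℝ), psi x * h x)^2 =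
      (∫ x in Ioi (0:ℝ), (psi x)^2 * exp (-x)) *
        ((∫ x in Ioi (0:ℝ), (h x)^2 * exp x) - (∫ x in Ioi (0:ℝ), x * h x)^2) :=
  stmt_16_general C D h hdef
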